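/- arXiv:2106.16116 — 3 statements merged into one kernel-verified Lean document; each statement's English description precedes it below -/
import Mathlib

section
/- Let A ∈ ℝⁿˣⁿ be positive semidefinite, X ∈ ℝⁿˣᵈ a matrix with rows x₁,…,xₙ, and η ∈ ℝᵈ positive. Then the integral over ℝᵈ of the PSD model f(x) = Σᵢⱼ Aᵢⱼ k_η(xᵢ,x) k_η(xⱼ,x) equals c_{2η} · Tr(A K), where c_{2η} = π^{d/2} ∏ₜ (2ηₜ)^{-1/2} and K is the n×n matrix with Kᵢⱼ = k_{η/2}(xᵢ,xⱼ). -/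
/-! Completing the square, `k_η(a,x) k_η(b,x) = k_{η/2}(a,b) · k_{2η}((a+b)/2, x)`, so each term
`Aᵢⱼ k_η(xᵢ,·) k_η(xⱼ,·)` integrates to `Aᵢⱼ Kᵢⱼ` times the mass `c_{2η} = ∏ₜ √(π / 2ηₜ)` of a
Gaussian of precision `2η`; by symmetry of `K`, `Σᵢⱼ Aᵢⱼ Kᵢⱼ = Tr(A K)`. -/

open MeasureTheory

/-- The anisotropic Gaussian kernel with precision vector `η`. -/
noncomputable def gaussK {d : ℕ} (η x y : Fin d → ℝ) : ℝ :=
  Real.exp (-∑ t, η t * (x t - y t) ^ 2)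

lemma integral_exp_neg_mul_sub_sq (c m : ℝ) :
    ∫ y : ℝ, Real.exp (-(c * (y - m) ^ 2)) = √(Real.pi / c) := by
  rw [integral_sub_right_eq_self (fun y => Real.exp (-(c * y ^ 2))) m]
  simpa only [neg_mul] using integral_gaussian c

lemma integrable_exp_neg_mul_sub_sq {c : ℝ} (hc : 0 < c) (m : ℝ) :
    Integrable (fun y : ℝ => Real.exp (-(c * (y - m) ^ 2))) := by
  simpa only [neg_mul] using (integrable_exp_neg_mul_sq hc).comp_sub_right m

lemma prod_sqrt_pi_div {ι : Type*} [Fintype ι] {c : ι → ℝ} (hc : ∀ t, 0 ≤ c t) :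
    ∏ t, √(Real.pi / c t) =
      Real.pi ^ ((Fintype.card ι : ℝ) / 2) * ∏ t, c t ^ (-(1 : ℝ) / 2) := by
  have hfactor (t : ι) : √(Real.pi / c t) = Real.pi ^ ((1 : ℝ) / 2) * c t ^ (-(1 : ℝ) / 2) := by
    rw [Real.sqrt_div Real.pi_pos.le, Real.sqrt_eq_rpow, Real.sqrt_eq_rpow, div_eq_mul_inv,
      ← Real.rpow_neg (hc t), neg_div]
  rw [Finset.prod_congr rfl fun t _ => hfactor t, Finset.prod_mul_distrib, Finset.prod_const,
    Finset.card_univ, ← Real.rpow_mul_natCast Real.pi_pos.le]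
  ring_nf

namespace gaussK

variable {d : ℕ}

lemma comm (η x y : Fin d → ℝ) : gaussK η x y = gaussK η y x := by
  simp only [gaussK, sub_sq_comm (x _)]

lemma mul_eq (η a b x : Fin d → ℝ) :
    gaussK η a x * gaussK η b x =
      gaussK (fun t => η t / 2) a b *
        ∏ t, Real.exp (-(2 * η t * (x t - (a t + b t) / 2) ^ 2)) := by
  have hexponent : (-∑ t, η t * (a t - x t) ^ 2) + (-∑ t, η t * (b t - x t) ^ 2) =
      (-∑ t, η t / 2 * (a t - b t) ^ 2) + ∑ t, -(2 * η t * (x t - (a t + b t) / 2) ^ 2) := by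
    simp only [← Finset.sum_neg_distrib, ← Finset.sum_add_distrib]
    exact Finset.sum_congr rfl fun t _ => by ring
  rw [gaussK, gaussK, gaussK, ← Real.exp_add, hexponent, Real.exp_add, Real.exp_sum]

variable {η : Fin d → ℝ} (hη : ∀ t, 0 < η t) (a b : Fin d → ℝ)
include hη

lemma integrable_mul : Integrable fun x => gaussK η a x * gaussK η b x := by
  simp_rw [mul_eq]
  have hfactor (t : Fin d) :
      Integrable fun y => Real.exp (-(2 * η t * (y - (a t + b t) / 2) ^ 2)) :=
    integrable_exp_neg_mul_sub_sq (by linarith [hη t]) _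
  exact (Integrable.fintype_prod hfactor).const_mul _

lemma integral_mul :
    ∫ x, gaussK η a x * gaussK η b x =
      gaussK (fun t => η t / 2) a b *
        (Real.pi ^ ((d : ℝ) / 2) * ∏ t, (2 * η t) ^ (-(1 : ℝ) / 2)) := by
  have h2η (t : Fin d) : 0 < 2 * η t := by linarith [hη t]
  simp_rw [mul_eq]
  rw [integral_const_mul, volume_pi, integral_fintype_prod_eq_prod (ι := Fin d)
      (fun t y => Real.exp (-(2 * η t * (y - (a t + b t) / 2) ^ 2))),
    Finset.prod_congr rfl fun t _ => integral_exp_neg_mul_sub_sq _ _,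
    prod_sqrt_pi_div fun t => (h2η t).le, Fintype.card_fin]

end gaussK

lemma Matrix.trace_mul_of_symm {n R : Type*} [Fintype n] [CommSemiring R] (A : Matrix n n R)
    {k : n → n → R} (hk : ∀ i j, k i j = k j i) :
    (A * Matrix.of k).trace = ∑ i, ∑ j, A i j * k i j := by
  simp only [Matrix.trace, Matrix.diag_apply, Matrix.mul_apply, Matrix.of_apply, hk]

theorem psd_model_integral_general (d n : ℕ) (A : Matrix (Fin n) (Fin n) ℝ)
    (X : Fin n → Fin d → ℝ) (η : Fin d → ℝ) (hη : ∀ t, 0 < η t) :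
    ∫ x : Fin d → ℝ, ∑ i, ∑ j, A i j * gaussK η (X i) x * gaussK η (X j) x =
      (Real.pi ^ ((d : ℝ) / 2) * ∏ t, (2 * η t) ^ (-(1 : ℝ) / 2)) *
        Matrix.trace (A * Matrix.of fun i j => gaussK (fun t => η t / 2) (X i) (X j)) := by
  have hint (i j : Fin n) :
      Integrable fun x => A i j * gaussK η (X i) x * gaussK η (X j) x := by
    simp_rw [mul_assoc]
    exact (gaussK.integrable_mul hη _ _).const_mul _
  calc ∫ x, ∑ i, ∑ j, A i j * gaussK η (X i) x * gaussK η (X j) x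
      = ∑ i, ∑ j, A i j * ∫ x, gaussK η (X i) x * gaussK η (X j) x := by
        rw [integral_finsetSum _ fun i _ => integrable_finsetSum _ fun j _ => hint i j]
        refine Finset.sum_congr rfl fun i _ => ?_
        rw [integral_finsetSum _ fun j _ => hint i j]
        simp_rw [mul_assoc, integral_const_mul]
    _ = _ := by
        simp_rw [gaussK.integral_mul hη, Matrix.trace_mul_of_symm A fun i j => gaussK.comm _ _ _,
          Finset.mul_sum]
        exact Finset.sum_congr rfl fun i _ => Finset.sum_congr rfl fun j _ => by ring

/-- Integration of a Gaussian PSD model: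
`∫ Σᵢⱼ Aᵢⱼ k_η(xᵢ,x)k_η(xⱼ,x) dx = c_{2η} Tr(A K)` with `K` the `k_{η/2}` kernel matrix. -/
theorem psd_model_integral (d n : ℕ) (A : Matrix (Fin n) (Fin n) ℝ) (hA : A.PosSemidef)
    (X : Fin n → Fin d → ℝ) (η : Fin d → ℝ) (hη : ∀ t, 0 < η t) :
    ∫ x : Fin d → ℝ, ∑ i, ∑ j, A i j * gaussK η (X i) x * gaussK η (X j) x =
      (Real.pi ^ ((d : ℝ) / 2) * ∏ t, (2 * η t) ^ (-(1 : ℝ) / 2)) *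
        Matrix.trace (A * Matrix.of fun i j => gaussK (fun t => η t / 2) (X i) (X j)) :=
  psd_model_integral_general d n A X η hη
end

section
/- Marginalization of a Gaussian PSD model: let A ∈ ℝⁿˣⁿ be positive semidefinite, let (xᵢ,yᵢ) ∈ ℝᵈ × ℝᵈ' for i=1,…,n, and let η ∈ ℝᵈ, η' ∈ ℝᵈ' be positive. Then ∫_{ℝᵈ} Σᵢⱼ Aᵢⱼ k_η(xᵢ,x)k_η(xⱼ,x)k_{η'}(yᵢ,y)k_{η'}(yⱼ,y) dx = Σᵢⱼ Bᵢⱼ k_{η'}(yᵢ,y)k_{η'}(yⱼ,y), where Bᵢⱼ = c_{2η} · Aᵢⱼ · k_{η/2}(xᵢ,xⱼ) and c_{2η} = π^{d/2} ∏ₜ(2ηₜ)^{-1/2}. Moreover the matrix B is positive semidefinite. -/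
open MeasureTheory

section QuadraticForms

open Matrix

variable {ι α : Type*} [Fintype ι] [MeasurableSpace α] {μ : Measure α} {φ : ι → α → ℝ}

theorem integral_sum_sum_mul_mul (hφ : ∀ i j, Integrable (fun x => φ i x * φ j x) μ)
    (c : ι → ι → ℝ) :
    ∫ x, ∑ i, ∑ j, c i j * (φ i x * φ j x) ∂μ = ∑ i, ∑ j, c i j * ∫ x, φ i x * φ j x ∂μ := by
  have hint : ∀ i j, Integrable (fun x => c i j * (φ i x * φ j x)) μ :=
    fun i j => (hφ i j).const_mul _
  rw [integral_finsetSum _ fun i _ => integrable_finsetSum _ fun j _ => hint i j]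
  refine Finset.sum_congr rfl fun i _ => ?_
  rw [integral_finsetSum _ fun j _ => hint i j]
  exact Finset.sum_congr rfl fun j _ => integral_const_mul _ _

theorem Matrix.PosSemidef.hadamard_integral_gram {A : Matrix ι ι ℝ} (hA : A.PosSemidef)
    (hφ : ∀ i j, Integrable (fun x => φ i x * φ j x) μ) :
    (Matrix.of fun i j => A i j * ∫ x, φ i x * φ j x ∂μ).PosSemidef := by
  refine .of_dotProduct_mulVec_nonneg ?_ fun v => ?_
  · ext i j
    simp only [Matrix.conjTranspose_apply, Matrix.of_apply, star_trivial, mul_comm (φ i _)]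
    rw [← hA.1.apply i j, star_trivial]
  · have hquad : star v ⬝ᵥ ((Matrix.of fun i j => A i j * ∫ x, φ i x * φ j x ∂μ) *ᵥ v) =
        ∫ x, ∑ i, ∑ j, (v i * A i j * v j) * (φ i x * φ j x) ∂μ := by
      rw [integral_sum_sum_mul_mul hφ]
      simp only [dotProduct, Matrix.mulVec, Matrix.of_apply, star_trivial, Finset.mul_sum]
      exact Finset.sum_congr rfl fun i _ => Finset.sum_congr rfl fun j _ => by ring
    rw [hquad]
    refine integral_nonneg fun x =>
      (hA.dotProduct_mulVec_nonneg fun i => v i * φ i x).trans_eq ?_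
    simp only [dotProduct, Matrix.mulVec, star_trivial, Finset.mul_sum]
    exact Finset.sum_congr rfl fun i _ => Finset.sum_congr rfl fun j _ => by ring

end QuadraticForms

section Gaussian

theorem exp_neg_sq_add_sq_eq (η a b x : ℝ) :
    Real.exp (-(η * (a - x) ^ 2 + η * (b - x) ^ 2)) =
      Real.exp (-(2 * η) * (x - (a + b) / 2) ^ 2) * Real.exp (-(η / 2 * (a - b) ^ 2)) := by
  rw [← Real.exp_add]
  ring_nf

theorem integrable_exp_neg_sq_add_sq {η : ℝ} (hη : 0 < η) (a b : ℝ) :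
    Integrable (fun x : ℝ => Real.exp (-(η * (a - x) ^ 2 + η * (b - x) ^ 2))) := by
  simp_rw [exp_neg_sq_add_sq_eq]
  exact ((integrable_exp_neg_mul_sq (by linarith)).comp_sub_right _).mul_const _

theorem integral_exp_neg_sq_add_sq (η a b : ℝ) :
    ∫ x : ℝ, Real.exp (-(η * (a - x) ^ 2 + η * (b - x) ^ 2)) =
      Real.sqrt (Real.pi / (2 * η)) * Real.exp (-(η / 2 * (a - b) ^ 2)) := by
  simp_rw [exp_neg_sq_add_sq_eq]
  rw [integral_mul_const,
    integral_sub_right_eq_self (fun x : ℝ => Real.exp (-(2 * η) * x ^ 2)), integral_gaussian]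

variable {d : ℕ} {η : Fin d → ℝ}

theorem gaussK_mul_gaussK (a b x : Fin d → ℝ) :
    gaussK η a x * gaussK η b x =
      ∏ t, Real.exp (-(η t * (a t - x t) ^ 2 + η t * (b t - x t) ^ 2)) := by
  simp only [gaussK, ← Real.exp_add, ← Real.exp_sum, neg_add, Finset.sum_add_distrib,
    Finset.sum_neg_distrib]

theorem prod_sqrt_pi_div_s4 (hη : ∀ t, 0 < η t) :
    ∏ t, Real.sqrt (Real.pi / (2 * η t)) =
      Real.pi ^ ((d : ℝ) / 2) * ∏ t, (2 * η t) ^ (-(1 : ℝ) / 2) := by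
  have hfactor : ∀ t, Real.sqrt (Real.pi / (2 * η t)) =
      Real.pi ^ ((1 : ℝ) / 2) * (2 * η t) ^ (-(1 : ℝ) / 2) := by
    intro t
    rw [Real.sqrt_div Real.pi_pos.le, Real.sqrt_eq_rpow, Real.sqrt_eq_rpow, div_eq_mul_inv,
      neg_div, Real.rpow_neg (by linarith [hη t])]
  rw [Finset.prod_congr rfl fun t _ => hfactor t, Finset.prod_mul_distrib, Finset.prod_const,
    Finset.card_univ, Fintype.card_fin, ← Real.rpow_natCast, ← Real.rpow_mul Real.pi_pos.le]
  ring_nf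

theorem integrable_gaussK_mul_gaussK (hη : ∀ t, 0 < η t) (a b : Fin d → ℝ) :
    Integrable (fun x => gaussK η a x * gaussK η b x) := by
  simp_rw [gaussK_mul_gaussK]
  exact Integrable.fintype_prod (f := fun t u => Real.exp (-(η t * (a t - u) ^ 2 +
    η t * (b t - u) ^ 2))) fun t => integrable_exp_neg_sq_add_sq (hη t) (a t) (b t)

theorem integral_gaussK_mul_gaussK (hη : ∀ t, 0 < η t) (a b : Fin d → ℝ) :
    ∫ x, gaussK η a x * gaussK η b x =
      (Real.pi ^ ((d : ℝ) / 2) * ∏ t, (2 * η t) ^ (-(1 : ℝ) / 2)) *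
        gaussK (fun t => η t / 2) a b := by
  simp_rw [gaussK_mul_gaussK]
  rw [volume_pi, integral_fintype_prod_eq_prod (μ := fun _ => volume)
    (f := fun t u => Real.exp (-(η t * (a t - u) ^ 2 + η t * (b t - u) ^ 2)))]
  simp_rw [integral_exp_neg_sq_add_sq]
  rw [Finset.prod_mul_distrib, prod_sqrt_pi_div_s4 hη, ← Real.exp_sum, gaussK,
    Finset.sum_neg_distrib]

end Gaussian

theorem psd_model_marginalization_general (d d' n : ℕ) (A : Matrix (Fin n) (Fin n) ℝ)
    (hA : A.PosSemidef) (X : Fin n → Fin d → ℝ) (Y : Fin n → Fin d' → ℝ)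
    (η : Fin d → ℝ) (η' : Fin d' → ℝ) (hη : ∀ t, 0 < η t) :
    (∀ y : Fin d' → ℝ,
      ∫ x : Fin d → ℝ, ∑ i, ∑ j, A i j * gaussK η (X i) x * gaussK η (X j) x *
          gaussK η' (Y i) y * gaussK η' (Y j) y =
        ∑ i, ∑ j,
          ((Real.pi ^ ((d : ℝ) / 2) * ∏ t, (2 * η t) ^ (-(1 : ℝ) / 2)) * A i j *
              gaussK (fun t => η t / 2) (X i) (X j)) *
            gaussK η' (Y i) y * gaussK η' (Y j) y) ∧
    (Matrix.of fun i j =>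
        (Real.pi ^ ((d : ℝ) / 2) * ∏ t, (2 * η t) ^ (-(1 : ℝ) / 2)) * A i j *
          gaussK (fun t => η t / 2) (X i) (X j)).PosSemidef := by
  have hint i j := integrable_gaussK_mul_gaussK hη (X i) (X j)
  constructor
  · intro y
    have hintegrand : ∀ x, ∑ i, ∑ j, A i j * gaussK η (X i) x * gaussK η (X j) x *
        gaussK η' (Y i) y * gaussK η' (Y j) y = ∑ i, ∑ j,
          (A i j * gaussK η' (Y i) y * gaussK η' (Y j) y) *
            (gaussK η (X i) x * gaussK η (X j) x) :=
      fun x => Finset.sum_congr rfl fun i _ => Finset.sum_congr rfl fun j _ => by ring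
    simp_rw [hintegrand, integral_sum_sum_mul_mul hint, integral_gaussK_mul_gaussK hη]
    exact Finset.sum_congr rfl fun i _ => Finset.sum_congr rfl fun j _ => by ring
  · convert hA.hadamard_integral_gram hint using 1
    ext i j
    rw [Matrix.of_apply, Matrix.of_apply, integral_gaussK_mul_gaussK hη]
    ring

/-- Sum rule (marginalization) for a Gaussian PSD model on `(x, y)`:
integrating out `x` yields a Gaussian PSD model in `y` with coefficient matrix
`Bᵢⱼ = c_{2η} Aᵢⱼ k_{η/2}(xᵢ, xⱼ)`, and `B` is positive semidefinite. -/
theorem psd_model_marginalization (d d' n : ℕ) (A : Matrix (Fin n) (Fin n) ℝ)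
    (hA : A.PosSemidef) (X : Fin n → Fin d → ℝ) (Y : Fin n → Fin d' → ℝ)
    (η : Fin d → ℝ) (η' : Fin d' → ℝ) (hη : ∀ t, 0 < η t) (hη' : ∀ t, 0 < η' t) :
    (∀ y : Fin d' → ℝ,
      ∫ x : Fin d → ℝ, ∑ i, ∑ j, A i j * gaussK η (X i) x * gaussK η (X j) x *
          gaussK η' (Y i) y * gaussK η' (Y j) y =
        ∑ i, ∑ j,
          ((Real.pi ^ ((d : ℝ) / 2) * ∏ t, (2 * η t) ^ (-(1 : ℝ) / 2)) * A i j *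
              gaussK (fun t => η t / 2) (X i) (X j)) *
            gaussK η' (Y i) y * gaussK η' (Y j) y) ∧
    (Matrix.of fun i j =>
        (Real.pi ^ ((d : ℝ) / 2) * ∏ t, (2 * η t) ^ (-(1 : ℝ) / 2)) * A i j *
          gaussK (fun t => η t / 2) (X i) (X j)).PosSemidef :=
  psd_model_marginalization_general d d' n A hA X Y η η' hη
end

section
/- Expectation of a function against a Gaussian PSD model: let p(x) = Σᵢⱼ Aᵢⱼ k_η(xᵢ,x)k_η(xⱼ,x) with A ∈ ℝⁿˣⁿ PSD, x₁,…,xₙ ∈ ℝᵈ, η ∈ ℝᵈ positive, and let g : ℝᵈ → ℝ be measurable with c_{g,2η}(z) := ∫ g(x) k_{2η}(z,x) dx finite for all z. Then ∫ g(x) p(x) dx = Σᵢⱼ Aᵢⱼ k_{η/2}(xᵢ,xⱼ) · c_{g,2η}((xᵢ+xⱼ)/2) = Tr((A ∘ K_{η/2}) G), where (K_{η/2})ᵢⱼ = k_{η/2}(xᵢ,xⱼ), Gᵢⱼ = c_{g,2η}((xᵢ+xⱼ)/2), and ∘ is the Hadamard product. -/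
open MeasureTheory

/-- Gaussian product identity. -/
lemma gaussK_mul {d : ℕ} (η a b x : Fin d → ℝ) :
    gaussK η a x * gaussK η b x =
      gaussK (fun t => η t / 2) a b *
        gaussK (fun t => 2 * η t) (fun t => (a t + b t) / 2) x := by
  simp only [gaussK, ← Real.exp_add, ← neg_add, ← Finset.sum_add_distrib]
  congr 2
  apply Finset.sum_congr rfl
  intro t _
  ring

/-- Expectation of `g` against a Gaussian PSD model `p`:
`∫ g p = Σᵢⱼ Aᵢⱼ k_{η/2}(xᵢ,xⱼ) c_{g,2η}((xᵢ+xⱼ)/2) = Tr((A ∘ K_{η/2}) G)`, where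
`c_{g,2η}(z) = ∫ g(x) k_{2η}(z,x) dx`, `∘` is the Hadamard product and
`Gᵢⱼ = c_{g,2η}((xᵢ+xⱼ)/2)`. -/
theorem psd_model_expectation (d n : ℕ) (A : Matrix (Fin n) (Fin n) ℝ)
    (hA : A.PosSemidef) (X : Fin n → Fin d → ℝ) (η : Fin d → ℝ) (hη : ∀ t, 0 < η t)
    (g : (Fin d → ℝ) → ℝ) (hgm : Measurable g)
    (hgint : ∀ z : Fin d → ℝ,
      Integrable (fun x => g x * gaussK (fun t => 2 * η t) z x)) :
    (∫ x : Fin d → ℝ,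
        g x * ∑ i, ∑ j, A i j * gaussK η (X i) x * gaussK η (X j) x) =
        (∑ i, ∑ j, A i j * gaussK (fun t => η t / 2) (X i) (X j) *
          ∫ x : Fin d → ℝ,
            g x * gaussK (fun t => 2 * η t) (fun t => (X i t + X j t) / 2) x) ∧
    (∑ i, ∑ j, A i j * gaussK (fun t => η t / 2) (X i) (X j) *
        ∫ x : Fin d → ℝ,
          g x * gaussK (fun t => 2 * η t) (fun t => (X i t + X j t) / 2) x) =
      Matrix.trace
        ((Matrix.hadamard A (Matrix.of fun i j => gaussK (fun t => η t / 2) (X i) (X j))) *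
          Matrix.of fun i j =>
            ∫ x : Fin d → ℝ,
              g x * gaussK (fun t => 2 * η t) (fun t => (X i t + X j t) / 2) x) := by
  constructor
  · have hrw : ∀ x : Fin d → ℝ,
        g x * ∑ i, ∑ j, A i j * gaussK η (X i) x * gaussK η (X j) x =
        ∑ i, ∑ j, A i j * gaussK (fun t => η t / 2) (X i) (X j) *
          (g x * gaussK (fun t => 2 * η t) (fun t => (X i t + X j t) / 2) x) := by
      intro x
      rw [Finset.mul_sum]
      apply Finset.sum_congr rfl; intro i _
      rw [Finset.mul_sum]
      apply Finset.sum_congr rfl; intro j _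
      rw [mul_assoc (A i j), gaussK_mul]
      ring
    simp only [hrw]
    rw [integral_finset_sum]
    · apply Finset.sum_congr rfl; intro i _
      rw [integral_finset_sum]
      · apply Finset.sum_congr rfl; intro j _
        exact integral_const_mul _ _
      · intro j _
        exact Integrable.const_mul (hgint _) _
    · intro i _
      apply integrable_finset_sum
      intro j _
      exact Integrable.const_mul (hgint _) _
  · rw [Matrix.trace]
    simp only [Matrix.diag_apply, Matrix.mul_apply, Matrix.hadamard_apply, Matrix.of_apply]
    apply Finset.sum_congr rfl; intro i _
    apply Finset.sum_congr rfl; intro j _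
    have : (fun t => (X j t + X i t) / 2) = fun t => (X i t + X j t) / 2 := by
      funext t; ring
    rw [this]
end
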